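/- arXiv:2604.15180 — 3 statements merged into one kernel-verified Lean document; each statement's English description precedes it below -/
import Mathlib

section
/- For α > 1 and centered scores z ∈ [0,1]^n with max(z) = 1, the function f(τ) = -1 + Σ_j max(z_j - τ, 0)^{1/(α-1)} is continuous and strictly decreasing on [0, 1 - n^{1-α}], and has a unique root τ* in this interval. -/
/-!
With `p = 1/(α-1) > 0`, the sum `∑ j, [z_j - τ]_+ ^ p` is continuous and non-increasing in `τ`,
and strictly decreasing as long as `τ` stays below the coordinate `z_{j₀} = 1`. At `τ = 0` that
coordinate alone contributes `1`, while at `τ = 1 - n^{1-α}` every term is at most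
`(n^{1-α})^p = 1/n`, so the sum is at most `1`. The intermediate value theorem gives a root, and
strict monotonicity makes it unique.
-/

open Finset

theorem StrictAntiOn.existsUnique_eq_zero_of_continuousOn {f : ℝ → ℝ} {a b : ℝ}
    (hab : a ≤ b) (hcont : ContinuousOn f (Set.Icc a b)) (hanti : StrictAntiOn f (Set.Icc a b))
    (ha : 0 ≤ f a) (hb : f b ≤ 0) :
    ∃! τ, τ ∈ Set.Icc a b ∧ f τ = 0 := by
  obtain ⟨τ, hτ, hfτ⟩ := intermediate_value_Icc' hab hcont ⟨hb, ha⟩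
  exact ⟨τ, ⟨hτ, hfτ⟩, fun σ ⟨hσ, hfσ⟩ =>
    hanti.injOn hσ hτ (hfσ.trans hfτ.symm)⟩

theorem Real.rpow_one_sub_rpow_one_div_sub_one {x α : ℝ} (hx : 0 ≤ x) (hα : α ≠ 1) :
    (x ^ (1 - α)) ^ (1 / (α - 1)) = x⁻¹ := by
  have hexp : (1 - α) * (1 / (α - 1)) = -1 := by
    field_simp [sub_ne_zero.mpr hα]
    ring
  rw [← Real.rpow_mul hx, hexp, Real.rpow_neg_one]

section PosPartPowSum

variable {ι : Type*} [Fintype ι] (z : ι → ℝ) {p : ℝ}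

noncomputable def posPartPowSum (p τ : ℝ) : ℝ :=
  ∑ j, max (z j - τ) 0 ^ p

theorem continuous_posPartPowSum (hp : 0 ≤ p) : Continuous (posPartPowSum z p) :=
  continuous_finsetSum _ fun _ _ =>
    ((continuous_const.sub continuous_id).max continuous_const).rpow_const fun _ => Or.inr hp

theorem posPartPowSum_strictAntiOn (hp : 0 < p) {s : Set ℝ} (j₀ : ι)
    (hs : ∀ τ ∈ s, τ < z j₀) : StrictAntiOn (posPartPowSum z p) s := by
  intro x _ y hy hxy
  refine sum_lt_sum (fun j _ => ?_) ⟨j₀, mem_univ _, ?_⟩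
  · exact Real.rpow_le_rpow (le_max_right _ _) (max_le_max (by linarith) le_rfl) hp.le
  · have hy₀ := hs y hy
    rw [max_eq_left (by linarith), max_eq_left (by linarith)]
    exact Real.rpow_lt_rpow (by linarith) (by linarith) hp

theorem rpow_le_posPartPowSum (τ : ℝ) (j : ι) :
    max (z j - τ) 0 ^ p ≤ posPartPowSum z p τ :=
  single_le_sum (f := fun j => max (z j - τ) 0 ^ p)
    (fun _ _ => Real.rpow_nonneg (le_max_right _ _) _) (mem_univ j)

theorem posPartPowSum_le_card_mul (hp : 0 ≤ p) {τ c : ℝ} (hc : 0 ≤ c)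
    (hz : ∀ j, z j - τ ≤ c) :
    posPartPowSum z p τ ≤ Fintype.card ι * c ^ p := by
  calc posPartPowSum z p τ ≤ ∑ _j : ι, c ^ p :=
        sum_le_sum fun j _ => Real.rpow_le_rpow (le_max_right _ _) (max_le (hz j) hc) hp
    _ = Fintype.card ι * c ^ p := by rw [sum_const, card_univ, nsmul_eq_mul]

end PosPartPowSum

theorem entmax_f_cont_strictAnti_unique_root_general
    (α : ℝ) (hα : 1 < α) (n : ℕ) (z : Fin n → ℝ)
    (hz : ∀ j, z j ∈ Set.Icc (0:ℝ) 1) (hmax : ∃ j, z j = 1)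
    (f : ℝ → ℝ)
    (hf : f = fun τ => -1 + ∑ j, (max (z j - τ) 0) ^ (1/(α-1)) ) :
    ContinuousOn f (Set.Icc (0:ℝ) (1 - (n:ℝ) ^ (1-α))) ∧
    StrictAntiOn f (Set.Icc (0:ℝ) (1 - (n:ℝ) ^ (1-α))) ∧
    ∃! τ, τ ∈ Set.Icc (0:ℝ) (1 - (n:ℝ) ^ (1-α)) ∧ f τ = 0 := by
  obtain ⟨j₀, hj₀⟩ := hmax
  obtain rfl : f = fun τ => -1 + posPartPowSum z (1 / (α - 1)) τ := hf
  set b := 1 - (n : ℝ) ^ (1 - α) with hb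
  have hp : 0 < 1 / (α - 1) := one_div_pos.mpr (sub_pos.mpr hα)
  have hn : (0 : ℝ) < n := Nat.cast_pos.mpr j₀.pos
  have hb₀ : 0 ≤ b := sub_nonneg.mpr <|
    Real.rpow_le_one_of_one_le_of_nonpos (Nat.one_le_cast.mpr j₀.pos) (by linarith)
  have hb₁ : 0 < 1 - b := by rw [hb, sub_sub_cancel]; exact Real.rpow_pos_of_pos hn _
  have hanti : StrictAntiOn (fun τ => -1 + posPartPowSum z (1 / (α - 1)) τ) (Set.Icc 0 b) :=
    fun x hx y hy hxy => add_lt_add_right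
      (posPartPowSum_strictAntiOn z hp j₀ (fun τ hτ => by linarith [hτ.2]) hx hy hxy) _
  have hcont : ContinuousOn (fun τ => -1 + posPartPowSum z (1 / (α - 1)) τ) (Set.Icc 0 b) :=
    (continuous_const.add (continuous_posPartPowSum z hp.le)).continuousOn
  have hsum_zero : 1 ≤ posPartPowSum z (1 / (α - 1)) 0 := by
    simpa [hj₀] using rpow_le_posPartPowSum z (p := 1 / (α - 1)) 0 j₀
  have hsum_b : posPartPowSum z (1 / (α - 1)) b ≤ 1 := by
    have := posPartPowSum_le_card_mul z hp.le (τ := b) hb₁.le (fun j => by linarith [(hz j).2])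
    rwa [Fintype.card_fin, sub_sub_cancel, Real.rpow_one_sub_rpow_one_div_sub_one hn.le hα.ne',
      mul_inv_cancel₀ hn.ne'] at this
  exact ⟨hcont, hanti, hanti.existsUnique_eq_zero_of_continuousOn hb₀ hcont
    (by linarith) (by linarith)⟩

theorem entmax_f_cont_strictAnti_unique_root
    (α : ℝ) (hα : 1 < α) (n : ℕ) (hn : 1 ≤ n) (z : Fin n → ℝ)
    (hz : ∀ j, z j ∈ Set.Icc (0:ℝ) 1) (hmax : ∃ j, z j = 1)
    (f : ℝ → ℝ)
    (hf : f = fun τ => -1 + ∑ j, (max (z j - τ) 0) ^ (1/(α-1)) ) :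
    ContinuousOn f (Set.Icc (0:ℝ) (1 - (n:ℝ) ^ (1-α))) ∧
    StrictAntiOn f (Set.Icc (0:ℝ) (1 - (n:ℝ) ^ (1-α))) ∧
    ∃! τ, τ ∈ Set.Icc (0:ℝ) (1 - (n:ℝ) ^ (1-α)) ∧ f τ = 0 :=
  entmax_f_cont_strictAnti_unique_root_general α hα n z hz hmax f hf
end

section
/- For α > 1 and scores s ∈ ℝ^n, the unique normalizer τ* satisfying Σ_j [(α-1)s_j - τ*]_+^{1/(α-1)} = 1 obeys the bounds m - 1 ≤ τ* ≤ m - n^{1-α}, where m = (α-1)·max_j s_j. -/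
open Finset

theorem entmax_normalizer_bounds
    (α : ℝ) (hα : 1 < α) (n : ℕ) (hn : 1 ≤ n) (s : Fin n → ℝ)
    (M : ℝ) (hM : IsGreatest (Set.range s) M)
    (m : ℝ) (hm : m = (α - 1) * M)
    (τstar : ℝ)
    (hroot : ∑ j, (max ((α - 1) * s j - τstar) 0) ^ (1/(α-1)) = 1) :
    m - 1 ≤ τstar ∧ τstar ≤ m - (n:ℝ) ^ (1 - α) := by
  have hα1 : (0:ℝ) < α - 1 := by linarith
  have hαne : α - 1 ≠ 0 := ne_of_gt hα1
  have hc : (0:ℝ) < 1/(α-1) := by positivity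
  have hnonneg : ∀ j : Fin n, (0:ℝ) ≤ (max ((α - 1) * s j - τstar) 0) ^ (1/(α-1)) :=
    fun j => Real.rpow_nonneg (le_max_right _ _) _
  have hmaxnn : (0:ℝ) ≤ max (m - τstar) 0 := le_max_right _ _
  obtain ⟨j₀, hj₀⟩ := hM.1
  have hterm : (max (m - τstar) 0) ^ (1/(α-1)) ≤ 1 := by
    have := Finset.single_le_sum (f := fun j => (max ((α - 1) * s j - τstar) 0) ^ (1/(α-1)))
      (fun j _ => hnonneg j) (Finset.mem_univ j₀)
    simp only [hj₀, ← hm] at this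
    exact le_of_le_of_eq this hroot
  have hcm : 1/(α-1) * (α-1) = 1 := by field_simp
  have hlow : max (m - τstar) 0 ≤ 1 := by
    have := Real.rpow_le_rpow (Real.rpow_nonneg hmaxnn _) hterm (le_of_lt hα1)
    rwa [Real.one_rpow, ← Real.rpow_mul hmaxnn, hcm, Real.rpow_one] at this
  constructor
  · have : m - τstar ≤ 1 := le_trans (le_max_left _ _) hlow
    linarith
  · -- each term ≤ the max term
    have hbound : ∀ j : Fin n, (max ((α - 1) * s j - τstar) 0) ^ (1/(α-1)) ≤
        (max (m - τstar) 0) ^ (1/(α-1)) := by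
      intro j
      apply Real.rpow_le_rpow (le_max_right _ _) _ (le_of_lt hc)
      apply max_le_max _ le_rfl
      have : s j ≤ M := hM.2 ⟨j, rfl⟩
      nlinarith
    have hnpos : (0:ℝ) < n := by exact_mod_cast Nat.lt_of_lt_of_le Nat.zero_lt_one hn
    have hsum : (1:ℝ) ≤ n * (max (m - τstar) 0) ^ (1/(α-1)) := by
      have h := Finset.sum_le_sum (s := Finset.univ) (fun j _ => hbound j)
      rw [Finset.sum_const, Finset.card_univ, Fintype.card_fin, nsmul_eq_mul, hroot] at h
      exact h
    have h1n : (1/(n:ℝ)) ≤ (max (m - τstar) 0) ^ (1/(α-1)) := by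
      rw [div_le_iff₀ hnpos] at *
      linarith [hsum]
    have hkey : (n:ℝ) ^ (1 - α) ≤ max (m - τstar) 0 := by
      have h2 := Real.rpow_le_rpow (by positivity) h1n (le_of_lt hα1)
      rw [← Real.rpow_mul hmaxnn, hcm, Real.rpow_one] at h2
      have h3 : ((1:ℝ)/n) ^ (α-1) = (n:ℝ) ^ (1 - α) := by
        rw [one_div, ← Real.rpow_neg_one (n:ℝ), ← Real.rpow_mul (le_of_lt hnpos)]
        ring_nf
      rwa [h3] at h2
    have hpos : (0:ℝ) < (n:ℝ) ^ (1 - α) := Real.rpow_pos_of_pos hnpos _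
    rcases le_max_iff.mp hkey with h | h
    · linarith
    · linarith
end

section
/- The histogram root never overestimates the true threshold: under the binning b_j ≤ z_j (left-edge binning) for all j, the unique root τ_h of f_h satisfies τ_h ≤ τ*, and consequently the support {j : z_j > τ_h} induced by τ_h contains the true support {j : z_j > τ*}. -/
open Finset

theorem histogram_root_never_overestimates
    (α : ℝ) (hα : 1 < α) (n : ℕ) (z b : Fin n → ℝ)
    (hbz : ∀ j, b j ≤ z j)
    (τstar τh : ℝ)
    (hroot : -1 + ∑ j, (max (z j - τstar) 0) ^ (1/(α-1)) = 0)
    (hrooth : -1 + ∑ j, (max (b j - τh) 0) ^ (1/(α-1)) = 0) :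
    τh ≤ τstar ∧ {j | z j > τstar} ⊆ {j | z j > τh} := by
  have hp : 0 < 1/(α-1) := div_pos one_pos (by linarith)
  have h1 : ∑ j, (max (z j - τstar) 0) ^ (1/(α-1)) = 1 := by linarith
  have h2 : ∑ j, (max (b j - τh) 0) ^ (1/(α-1)) = 1 := by linarith
  have hτ : τh ≤ τstar := by
    by_contra h
    push_neg at h
    have hex : ∃ j, 0 < b j - τh := by
      by_contra hc
      push_neg at hc
      have hz : ∑ j, (max (b j - τh) 0) ^ (1/(α-1)) = 0 := by
        apply Finset.sum_eq_zero
        intro j _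
        rw [max_eq_right (hc j), Real.zero_rpow (ne_of_gt hp)]
      linarith
    obtain ⟨j0, hj0⟩ := hex
    have hlt : ∑ j, (max (b j - τh) 0) ^ (1/(α-1)) <
        ∑ j, (max (z j - τstar) 0) ^ (1/(α-1)) := by
      apply Finset.sum_lt_sum
      · intro j _
        exact Real.rpow_le_rpow (le_max_right _ _)
          (max_le_max (by linarith [hbz j]) le_rfl) hp.le
      · refine ⟨j0, Finset.mem_univ _, ?_⟩
        apply Real.rpow_lt_rpow (le_max_right _ _) ?_ hp
        rw [max_eq_left hj0.le]
        exact lt_of_lt_of_le (by linarith [hbz j0]) (le_max_left _ _)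
    linarith
  refine ⟨hτ, fun j hj => ?_⟩
  simp only [Set.mem_setOf_eq] at *
  linarith
end
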